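/- Let a ∈ [0, 1/2], let C be a copula, and let B_{a,C} be the ordinal sum of the single copula {C} with respect to the single interval {(a, 1−a)}. Then ρ(B_{a,C}) = (1−2a)³·ρ(C) + 8a³ − 12a² + 6a, φ(B_{a,C}) = (1−2a)²·φ(C) + 4a − 4a², γ(B_{a,C}) = (1−2a)²·γ(C) + 4a − 4a², and β(B_{a,C}) = (1−2a)·β(C) + 2a. -/

import Mathlib

open MeasureTheory Set

/-- A bivariate copula, viewed as a real function of two variables whose defining
properties are required on the unit square. -/
def IsCopula (C : ℝ → ℝ → ℝ) : Prop :=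
  (∀ v ∈ Icc (0:ℝ) 1, C 0 v = 0) ∧
  (∀ u ∈ Icc (0:ℝ) 1, C u 0 = 0) ∧
  (∀ u ∈ Icc (0:ℝ) 1, C u 1 = u) ∧
  (∀ v ∈ Icc (0:ℝ) 1, C 1 v = v) ∧
  (∀ u₁ u₂ v₁ v₂ : ℝ, 0 ≤ u₁ → u₁ ≤ u₂ → u₂ ≤ 1 → 0 ≤ v₁ → v₁ ≤ v₂ → v₂ ≤ 1 →
    0 ≤ C u₂ v₂ - C u₂ v₁ - C u₁ v₂ + C u₁ v₁)

/-- Spearman's rho: ρ(C) = 12·∫₀¹∫₀¹ C(u,v) du dv − 3. -/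
noncomputable def spearmanRho (C : ℝ → ℝ → ℝ) : ℝ :=
  12 * (∫ u in (0:ℝ)..1, ∫ v in (0:ℝ)..1, C u v) - 3

/-- Spearman's footrule: φ(C) = 6·∫₀¹ C(u,u) du − 2. -/
noncomputable def footrule (C : ℝ → ℝ → ℝ) : ℝ :=
  6 * (∫ u in (0:ℝ)..1, C u u) - 2

/-- Gini's gamma: γ(C) = 4·∫₀¹ C(u,u) du + 4·∫₀¹ C(u,1−u) du − 2. -/
noncomputable def giniGamma (C : ℝ → ℝ → ℝ) : ℝ :=
  4 * (∫ u in (0:ℝ)..1, C u u) + 4 * (∫ u in (0:ℝ)..1, C u (1 - u)) - 2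

/-- Blomqvist's beta: β(C) = 4·C(1/2,1/2) − 1. -/
noncomputable def blomqvistBeta (C : ℝ → ℝ → ℝ) : ℝ :=
  4 * C (1/2) (1/2) - 1

/-- A copula measure of a copula `C`: a probability measure on the plane with
μ([0,u]×[0,v]) = C(u,v) for u,v in the unit interval. -/
def IsCopulaMeasure (C : ℝ → ℝ → ℝ) (μ : Measure (ℝ × ℝ)) : Prop :=
  IsProbabilityMeasure μ ∧
  ∀ u ∈ Icc (0:ℝ) 1, ∀ v ∈ Icc (0:ℝ) 1,
    μ (Icc 0 u ×ˢ Icc 0 v) = ENNReal.ofReal (C u v)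

/-- Kendall's tau expressed via a copula measure μ of C:
τ(C) = 4·∫_{[0,1]²} C dμ − 1. -/
noncomputable def kendallTauInt (C : ℝ → ℝ → ℝ) (μ : Measure (ℝ × ℝ)) : ℝ :=
  4 * (∫ p in Icc (0:ℝ) 1 ×ˢ Icc (0:ℝ) 1, C p.1 p.2 ∂μ) - 1

/-- `B` is the ordinal sum of the copulas `Bk k` with respect to the pairwise disjoint
open subintervals `(a k, b k)` of `[0,1]`. -/
def IsOrdinalSum {n : ℕ} (a b : Fin n → ℝ) (Bk : Fin n → ℝ → ℝ → ℝ)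
    (B : ℝ → ℝ → ℝ) : Prop :=
  (∀ k, 0 ≤ a k ∧ a k ≤ b k ∧ b k ≤ 1) ∧
  (Pairwise fun i j => Disjoint (Ioo (a i) (b i)) (Ioo (a j) (b j))) ∧
  (∀ k, ∀ u ∈ Icc (a k) (b k), ∀ v ∈ Icc (a k) (b k),
    B u v = a k + (b k - a k) * Bk k ((u - a k) / (b k - a k)) ((v - a k) / (b k - a k))) ∧
  (∀ u ∈ Icc (0:ℝ) 1, ∀ v ∈ Icc (0:ℝ) 1,
    (∀ k, ¬(u ∈ Icc (a k) (b k) ∧ v ∈ Icc (a k) (b k))) → B u v = min u v)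


/-!
Write `M = min` and let `E_C` be `C - M` on the unit square, extended by zero; as `C = M` on the
boundary of the square, `E_C` is continuous. With `s = 1 - 2a`, the ordinal sum is
`B(u, v) = M(u, v) + s * E_C((u - a) / s, (v - a) / s)` on the square. All four measures are affine
in the copula and equal `1` at `M`, so only the `E_C`-part changes, and the substitution
`x = (u - a) / s` scales it by `s` per integration besides the outer factor `s`: by `s³` for ρ, by
`s²` for φ and γ (the interval is symmetric, so the antidiagonal `v = 1 - u` is mapped to itself),
and by `s` for β (the centre `1/2` is fixed).
-/

open Function

namespace IsCopula

variable {C : ℝ → ℝ → ℝ}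

lemma swap (hC : IsCopula C) : IsCopula fun u v => C v u := by
  obtain ⟨h0v, hu0, hu1, h1v, hrect⟩ := hC
  refine ⟨hu0, h0v, h1v, hu1, fun u₁ u₂ v₁ v₂ h₁ h₁₂ h₂ h₃ h₃₄ h₄ => ?_⟩
  linarith [hrect v₁ v₂ u₁ u₂ h₃ h₃₄ h₄ h₁ h₁₂ h₂]

lemma sub_mem_Icc_left (hC : IsCopula C) {u₁ u₂ v : ℝ} (h₁ : 0 ≤ u₁) (h₁₂ : u₁ ≤ u₂) (h₂ : u₂ ≤ 1)
    (hv : v ∈ Icc (0:ℝ) 1) : C u₂ v - C u₁ v ∈ Icc 0 (u₂ - u₁) := by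
  obtain ⟨-, hu0, hu1, -, hrect⟩ := hC
  have lower := hrect u₁ u₂ 0 v h₁ h₁₂ h₂ le_rfl hv.1 hv.2
  have upper := hrect u₁ u₂ v 1 h₁ h₁₂ h₂ hv.1 hv.2 le_rfl
  rw [hu0 u₁ ⟨h₁, h₁₂.trans h₂⟩, hu0 u₂ ⟨h₁.trans h₁₂, h₂⟩] at lower
  rw [hu1 u₁ ⟨h₁, h₁₂.trans h₂⟩, hu1 u₂ ⟨h₁.trans h₁₂, h₂⟩] at upper
  constructor <;> linarith

lemma abs_sub_le_left (hC : IsCopula C) {u₁ u₂ v : ℝ} (hu₁ : u₁ ∈ Icc (0:ℝ) 1)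
    (hu₂ : u₂ ∈ Icc (0:ℝ) 1) (hv : v ∈ Icc (0:ℝ) 1) : |C u₂ v - C u₁ v| ≤ |u₂ - u₁| := by
  rcases le_total u₁ u₂ with h | h
  · obtain ⟨h0, h1⟩ := hC.sub_mem_Icc_left hu₁.1 h hu₂.2 hv
    rw [abs_of_nonneg h0, abs_of_nonneg (sub_nonneg.2 h)]
    exact h1
  · obtain ⟨h0, h1⟩ := hC.sub_mem_Icc_left hu₂.1 h hu₁.2 hv
    rw [abs_sub_comm, abs_of_nonneg h0, abs_sub_comm, abs_of_nonneg (sub_nonneg.2 h)]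
    exact h1

lemma lipschitzOnWith (hC : IsCopula C) :
    LipschitzOnWith 2 (uncurry C) (Icc (0:ℝ) 1 ×ˢ Icc (0:ℝ) 1) := by
  refine LipschitzOnWith.of_dist_le_mul fun p hp q hq => ?_
  have hu := hC.abs_sub_le_left hq.1 hp.1 hp.2
  have hv := hC.swap.abs_sub_le_left hq.2 hp.2 hq.1
  have h₁ : |p.1 - q.1| ≤ dist p q := by
    rw [Prod.dist_eq, ← Real.dist_eq]; exact le_max_left _ _
  have h₂ : |p.2 - q.2| ≤ dist p q := by
    rw [Prod.dist_eq, ← Real.dist_eq]; exact le_max_right _ _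
  rw [Real.dist_eq, NNReal.coe_ofNat]
  calc |C p.1 p.2 - C q.1 q.2| ≤ |C p.1 p.2 - C q.1 p.2| + |C q.1 p.2 - C q.1 q.2| :=
        abs_sub_le _ _ _
    _ ≤ 2 * dist p q := by linarith

lemma continuousOn (hC : IsCopula C) : ContinuousOn (uncurry C) (Icc (0:ℝ) 1 ×ˢ Icc (0:ℝ) 1) :=
  hC.lipschitzOnWith.continuousOn

end IsCopula

/-- For a copula, clamping the arguments into `[0, 1]` extends `C - min` by zero, since `C = min`
on the boundary of the unit square. -/
noncomputable def excessOverMin (C : ℝ → ℝ → ℝ) (x y : ℝ) : ℝ :=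
  C (projIcc 0 1 zero_le_one x) (projIcc 0 1 zero_le_one y) -
    min (projIcc (0:ℝ) 1 zero_le_one x : ℝ) (projIcc 0 1 zero_le_one y)

lemma excessOverMin_of_mem {C : ℝ → ℝ → ℝ} {x y : ℝ} (hx : x ∈ Icc (0:ℝ) 1)
    (hy : y ∈ Icc (0:ℝ) 1) : excessOverMin C x y = C x y - min x y := by
  simp only [excessOverMin, projIcc_of_mem _ hx, projIcc_of_mem _ hy]

lemma excessOverMin_swap (C : ℝ → ℝ → ℝ) (x y : ℝ) :
    excessOverMin (fun u v => C v u) y x = excessOverMin C x y := by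
  simp only [excessOverMin, min_comm]

namespace IsCopula

variable {C : ℝ → ℝ → ℝ}

lemma excessOverMin_eq_zero_of_left (hC : IsCopula C) {x : ℝ} (hx : x ∉ Ioo (0:ℝ) 1) (y : ℝ) :
    excessOverMin C x y = 0 := by
  obtain ⟨h0v, -, -, h1v, -⟩ := hC
  have hy := (projIcc (0:ℝ) 1 zero_le_one y).2
  rcases not_and_or.1 hx with hx | hx
  · simp only [excessOverMin, projIcc_of_le_left _ (not_lt.1 hx), h0v _ hy, min_eq_left hy.1,
      sub_self]
  · simp only [excessOverMin, projIcc_of_right_le _ (not_lt.1 hx), h1v _ hy, min_eq_right hy.2,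
      sub_self]

lemma excessOverMin_eq_zero_of_right (hC : IsCopula C) (x : ℝ) {y : ℝ} (hy : y ∉ Ioo (0:ℝ) 1) :
    excessOverMin C x y = 0 := by
  rw [← excessOverMin_swap, hC.swap.excessOverMin_eq_zero_of_left hy]

lemma continuous_excessOverMin {X : Type*} [TopologicalSpace X] (hC : IsCopula C) {f g : X → ℝ}
    (hf : Continuous f) (hg : Continuous g) : Continuous fun t => excessOverMin C (f t) (g t) := by
  have hclamp : Continuous fun t => ((projIcc (0:ℝ) 1 zero_le_one (f t) : ℝ),
      (projIcc (0:ℝ) 1 zero_le_one (g t) : ℝ)) := by fun_prop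
  exact (hC.continuousOn.comp_continuous hclamp fun t => ⟨Subtype.prop _, Subtype.prop _⟩).sub
    (continuous_min.comp hclamp)

end IsCopula

lemma integral_comp_sub_div_of_support_subset {h : ℝ → ℝ} (hh : support h ⊆ Ioo 0 1) {a s : ℝ}
    (ha : 0 ≤ a) (hs : 0 ≤ s) (has : a + s ≤ 1) :
    ∫ u in (0:ℝ)..1, h ((u - a) / s) = s * ∫ x in (0:ℝ)..1, h x := by
  rcases hs.eq_or_lt with rfl | hs
  · have h0 : h 0 = 0 := notMem_support.1 fun h0 => (hh h0).1.false
    simp [h0]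
  · have hsupp : ∀ {p q : ℝ}, p ≤ 0 → 1 ≤ q → support h ⊆ Ioc p q := fun hp hq =>
      hh.trans (Ioo_subset_Ioc_self.trans (Ioc_subset_Ioc hp hq))
    simp_rw [sub_div]
    rw [intervalIntegral.integral_comp_div_sub h hs.ne', smul_eq_mul,
      intervalIntegral.integral_eq_integral_of_support_subset (hsupp _ _),
      intervalIntegral.integral_eq_integral_of_support_subset (hsupp le_rfl le_rfl)]
    · rw [zero_div, zero_sub, neg_nonpos]; positivity
    · rw [← sub_div, le_div_iff₀ hs]; linarith

lemma integral_min_left {u : ℝ} (hu : u ∈ Icc (0:ℝ) 1) :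
    ∫ v in (0:ℝ)..1, min u v = u - u ^ 2 / 2 := by
  have hint : ∀ p q : ℝ, IntervalIntegrable (fun v => min u v) volume p q := fun _ _ =>
    (continuous_const.min continuous_id).intervalIntegrable _ _
  have below : ∫ v in (0:ℝ)..u, min u v = ∫ v in (0:ℝ)..u, v :=
    intervalIntegral.integral_congr fun v hv => min_eq_right (uIcc_of_le hu.1 ▸ hv).2
  have above : ∫ v in u..1, min u v = ∫ _ in u..1, u :=
    intervalIntegral.integral_congr fun v hv => min_eq_left (uIcc_of_le hu.2 ▸ hv).1
  rw [← intervalIntegral.integral_add_adjacent_intervals (hint 0 u) (hint u 1), below, above,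
    integral_id, intervalIntegral.integral_const, smul_eq_mul]
  ring

lemma integral_integral_min : ∫ u in (0:ℝ)..1, ∫ v in (0:ℝ)..1, min u v = 1 / 3 := by
  rw [intervalIntegral.integral_congr fun u hu =>
      integral_min_left (uIcc_of_le (zero_le_one' ℝ) ▸ hu),
    intervalIntegral.integral_sub intervalIntegral.intervalIntegrable_id
      ((intervalIntegral.intervalIntegrable_pow 2).div_const 2),
    intervalIntegral.integral_div, integral_id, integral_pow]
  norm_num

lemma integral_min_one_sub : ∫ u in (0:ℝ)..1, min u (1 - u) = 1 / 4 := by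
  have hint : ∀ p q : ℝ, IntervalIntegrable (fun u => min u (1 - u)) volume p q := fun _ _ =>
    (continuous_id.min (continuous_const.sub continuous_id)).intervalIntegrable _ _
  have below : ∫ u in (0:ℝ)..1 / 2, min u (1 - u) = ∫ u in (0:ℝ)..1 / 2, u :=
    intervalIntegral.integral_congr fun u hu => by
      rw [uIcc_of_le (by norm_num)] at hu; exact min_eq_left (by linarith [hu.2])
  have above : ∫ u in (1 / 2 : ℝ)..1, min u (1 - u) = ∫ u in (1 / 2 : ℝ)..1, (1 - u) :=
    intervalIntegral.integral_congr fun u hu => by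
      rw [uIcc_of_le (by norm_num)] at hu; exact min_eq_right (by linarith [hu.1])
  rw [← intervalIntegral.integral_add_adjacent_intervals (hint 0 (1 / 2)) (hint (1 / 2) 1), below,
    above, intervalIntegral.integral_sub intervalIntegrable_const
      intervalIntegral.intervalIntegrable_id,
    integral_id, integral_id, intervalIntegral.integral_const, smul_eq_mul]
  norm_num

/-- Closed form of the ordinal sum of the single copula `C` with respect to `(a, a + s)`. -/
noncomputable def ordinalSumSingle (C : ℝ → ℝ → ℝ) (a s u v : ℝ) : ℝ :=
  min u v + s * excessOverMin C ((u - a) / s) ((v - a) / s)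

lemma eqOn_ordinalSumSingle_zero_one (C : ℝ → ℝ → ℝ) :
    EqOn (uncurry C) (uncurry (ordinalSumSingle C 0 1)) (Icc (0:ℝ) 1 ×ˢ Icc (0:ℝ) 1) := by
  rintro ⟨u, v⟩ ⟨hu, hv⟩
  simp [ordinalSumSingle, excessOverMin_of_mem hu hv]

lemma IsOrdinalSum.eqOn_ordinalSumSingle {C B : ℝ → ℝ → ℝ} {a b : ℝ} (hC : IsCopula C)
    (hB : IsOrdinalSum (fun _ : Fin 1 => a) (fun _ => b) (fun _ => C) B) :
    EqOn (uncurry B) (uncurry (ordinalSumSingle C a (b - a))) (Icc (0:ℝ) 1 ×ˢ Icc (0:ℝ) 1) := by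
  obtain ⟨hbounds, -, hinside, houtside⟩ := hB
  obtain ⟨-, hab, -⟩ := hbounds 0
  simp only at hab hinside houtside
  rintro ⟨u, v⟩ ⟨hu, hv⟩
  simp only [uncurry_apply_pair, ordinalSumSingle]
  rcases hab.eq_or_lt with rfl | hlt
  · by_cases hsq : u ∈ Icc a a ∧ v ∈ Icc a a
    · rw [hinside 0 u hsq.1 v hsq.2, le_antisymm hsq.1.2 hsq.1.1, le_antisymm hsq.2.2 hsq.2.1]
      simp
    · simp [houtside u hu v hv fun _ => hsq]
  have hs : 0 < b - a := sub_pos.2 hlt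
  have hrescale : ∀ w, (w - a) / (b - a) ∈ Icc (0:ℝ) 1 ↔ w ∈ Icc a b := fun w => by
    rw [mem_Icc, mem_Icc, div_nonneg_iff, div_le_one hs]
    constructor
    · rintro ⟨⟨h0, -⟩ | ⟨-, h0⟩, h1⟩ <;> constructor <;> linarith
    · rintro ⟨h0, h1⟩; exact ⟨Or.inl ⟨by linarith, hs.le⟩, by linarith⟩
  by_cases hsq : u ∈ Icc a b ∧ v ∈ Icc a b
  · have hx := (hrescale u).2 hsq.1
    have hy := (hrescale v).2 hsq.2
    have hback : ∀ w, a + (b - a) * ((w - a) / (b - a)) = w := fun w => by field_simp; ring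
    have hmin : min u v = a + (b - a) * min ((u - a) / (b - a)) ((v - a) / (b - a)) := by
      rw [mul_min_of_nonneg _ _ hs.le, ← min_add_add_left, hback, hback]
    rw [hinside 0 u hsq.1 v hsq.2, excessOverMin_of_mem hx hy, hmin]
    ring
  · rw [houtside u hu v hv fun _ => hsq]
    have hout : (u - a) / (b - a) ∉ Ioo (0:ℝ) 1 ∨ (v - a) / (b - a) ∉ Ioo (0:ℝ) 1 := by
      rw [← hrescale, ← hrescale] at hsq
      exact not_and_or.1 fun h => hsq ⟨Ioo_subset_Icc_self h.1, Ioo_subset_Icc_self h.2⟩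
    rcases hout with hx | hy
    · rw [hC.excessOverMin_eq_zero_of_left hx, mul_zero, add_zero]
    · rw [hC.excessOverMin_eq_zero_of_right _ hy, mul_zero, add_zero]

section Congr

variable {F G : ℝ → ℝ → ℝ}

lemma spearmanRho_congr (h : EqOn (uncurry F) (uncurry G) (Icc (0:ℝ) 1 ×ˢ Icc (0:ℝ) 1)) :
    spearmanRho F = spearmanRho G := by
  unfold spearmanRho
  congr 2
  refine intervalIntegral.integral_congr fun u hu => intervalIntegral.integral_congr fun v hv => ?_
  rw [uIcc_of_le zero_le_one] at hu hv
  exact h (mk_mem_prod hu hv)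

lemma integral_diag_congr (h : EqOn (uncurry F) (uncurry G) (Icc (0:ℝ) 1 ×ˢ Icc (0:ℝ) 1)) :
    ∫ u in (0:ℝ)..1, F u u = ∫ u in (0:ℝ)..1, G u u := by
  refine intervalIntegral.integral_congr fun u hu => ?_
  rw [uIcc_of_le zero_le_one] at hu
  exact h (mk_mem_prod hu hu)

lemma footrule_congr (h : EqOn (uncurry F) (uncurry G) (Icc (0:ℝ) 1 ×ˢ Icc (0:ℝ) 1)) :
    footrule F = footrule G := by
  rw [footrule, footrule, integral_diag_congr h]

lemma giniGamma_congr (h : EqOn (uncurry F) (uncurry G) (Icc (0:ℝ) 1 ×ˢ Icc (0:ℝ) 1)) :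
    giniGamma F = giniGamma G := by
  have hanti : ∫ u in (0:ℝ)..1, F u (1 - u) = ∫ u in (0:ℝ)..1, G u (1 - u) := by
    refine intervalIntegral.integral_congr fun u hu => ?_
    rw [uIcc_of_le zero_le_one] at hu
    exact h (mk_mem_prod hu ⟨by linarith [hu.2], by linarith [hu.1]⟩)
  rw [giniGamma, giniGamma, integral_diag_congr h, hanti]

lemma blomqvistBeta_congr (h : EqOn (uncurry F) (uncurry G) (Icc (0:ℝ) 1 ×ˢ Icc (0:ℝ) 1)) :
    blomqvistBeta F = blomqvistBeta G := by
  have hhalf : (1 / 2 : ℝ) ∈ Icc (0:ℝ) 1 := ⟨by norm_num, by norm_num⟩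
  have hF : F (1 / 2) (1 / 2) = G (1 / 2) (1 / 2) := h (mk_mem_prod hhalf hhalf)
  rw [blomqvistBeta, blomqvistBeta, hF]

end Congr

section OrdinalSumSingle

variable {C : ℝ → ℝ → ℝ} {a s : ℝ}

lemma spearmanRho_ordinalSumSingle (hC : IsCopula C) (ha : 0 ≤ a) (hs : 0 ≤ s)
    (has : a + s ≤ 1) :
    spearmanRho (ordinalSumSingle C a s) =
      1 + 12 * s ^ 3 * ∫ x in (0:ℝ)..1, ∫ y in (0:ℝ)..1, excessOverMin C x y := by
  set G : ℝ → ℝ := fun x => ∫ y in (0:ℝ)..1, excessOverMin C x y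
  have hG : Continuous G := intervalIntegral.continuous_parametric_intervalIntegral_of_continuous'
    (hC.continuous_excessOverMin continuous_fst continuous_snd) 0 1
  have hGsupp : support G ⊆ Ioo 0 1 := support_subset_iff'.2 fun x hx => by
    simp [G, hC.excessOverMin_eq_zero_of_left hx]
  have hinner : ∀ u, ∫ v in (0:ℝ)..1, ordinalSumSingle C a s u v =
      (∫ v in (0:ℝ)..1, min u v) + s ^ 2 * G ((u - a) / s) := fun u => by
    have hsupp : support (excessOverMin C ((u - a) / s)) ⊆ Ioo 0 1 :=
      support_subset_iff'.2 fun y hy => hC.excessOverMin_eq_zero_of_right _ hy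
    have hE : Continuous fun v => s * excessOverMin C ((u - a) / s) ((v - a) / s) :=
      continuous_const.mul (hC.continuous_excessOverMin continuous_const (by fun_prop))
    have hmin : Continuous fun v : ℝ => min u v := by fun_prop
    simp only [ordinalSumSingle]
    rw [intervalIntegral.integral_add (hmin.intervalIntegrable _ _) (hE.intervalIntegrable _ _),
      intervalIntegral.integral_const_mul,
      integral_comp_sub_div_of_support_subset hsupp ha hs has]
    ring
  have hM : Continuous fun u : ℝ => ∫ v in (0:ℝ)..1, min u v :=
    intervalIntegral.continuous_parametric_intervalIntegral_of_continuous' continuous_min 0 1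
  have hGs : Continuous fun u => s ^ 2 * G ((u - a) / s) :=
    continuous_const.mul (hG.comp (by fun_prop))
  simp only [spearmanRho, hinner]
  rw [intervalIntegral.integral_add (hM.intervalIntegrable _ _) (hGs.intervalIntegrable _ _),
    intervalIntegral.integral_const_mul, integral_comp_sub_div_of_support_subset hGsupp ha hs has,
    integral_integral_min]
  ring

lemma integral_ordinalSumSingle_diag (hC : IsCopula C) (ha : 0 ≤ a) (hs : 0 ≤ s)
    (has : a + s ≤ 1) :
    ∫ u in (0:ℝ)..1, ordinalSumSingle C a s u u =
      1 / 2 + s ^ 2 * ∫ x in (0:ℝ)..1, excessOverMin C x x := by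
  have hsupp : support (fun x => excessOverMin C x x) ⊆ Ioo 0 1 :=
    support_subset_iff'.2 fun x hx => hC.excessOverMin_eq_zero_of_left hx x
  have hE : Continuous fun u => s * excessOverMin C ((u - a) / s) ((u - a) / s) :=
    continuous_const.mul (hC.continuous_excessOverMin (by fun_prop) (by fun_prop))
  simp only [ordinalSumSingle, min_self]
  rw [intervalIntegral.integral_add intervalIntegral.intervalIntegrable_id
      (hE.intervalIntegrable _ _), intervalIntegral.integral_const_mul,
    integral_comp_sub_div_of_support_subset hsupp ha hs has, integral_id]
  ring

lemma integral_ordinalSumSingle_antidiag (hC : IsCopula C) (ha : 0 ≤ a) (hs : 0 ≤ s)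
    (has : 2 * a + s = 1) :
    ∫ u in (0:ℝ)..1, ordinalSumSingle C a s u (1 - u) =
      1 / 4 + s ^ 2 * ∫ x in (0:ℝ)..1, excessOverMin C x (1 - x) := by
  have hsupp : support (fun x => excessOverMin C x (1 - x)) ⊆ Ioo 0 1 :=
    support_subset_iff'.2 fun x hx => hC.excessOverMin_eq_zero_of_left hx _
  have hreflect : ∀ u, s * excessOverMin C ((u - a) / s) ((1 - u - a) / s) =
      s * excessOverMin C ((u - a) / s) (1 - (u - a) / s) := fun u => by
    rcases eq_or_ne s 0 with rfl | hs0
    · simp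
    · congr 3
      field_simp
      linarith
  have hE : Continuous fun u => s * excessOverMin C ((u - a) / s) (1 - (u - a) / s) :=
    continuous_const.mul (hC.continuous_excessOverMin (by fun_prop) (by fun_prop))
  have hmin : Continuous fun u : ℝ => min u (1 - u) := by fun_prop
  simp only [ordinalSumSingle, hreflect]
  rw [intervalIntegral.integral_add (hmin.intervalIntegrable _ _) (hE.intervalIntegrable _ _),
    intervalIntegral.integral_const_mul,
    integral_comp_sub_div_of_support_subset (h := fun x => excessOverMin C x (1 - x)) hsupp ha hs
      (by linarith),
    integral_min_one_sub]
  ring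

lemma footrule_ordinalSumSingle (hC : IsCopula C) (ha : 0 ≤ a) (hs : 0 ≤ s) (has : a + s ≤ 1) :
    footrule (ordinalSumSingle C a s) = 1 + 6 * s ^ 2 * ∫ x in (0:ℝ)..1, excessOverMin C x x := by
  rw [footrule, integral_ordinalSumSingle_diag hC ha hs has]
  ring

lemma giniGamma_ordinalSumSingle (hC : IsCopula C) (ha : 0 ≤ a) (hs : 0 ≤ s)
    (has : 2 * a + s = 1) :
    giniGamma (ordinalSumSingle C a s) = 1 + 4 * s ^ 2 *
      ((∫ x in (0:ℝ)..1, excessOverMin C x x) + ∫ x in (0:ℝ)..1, excessOverMin C x (1 - x)) := by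
  rw [giniGamma, integral_ordinalSumSingle_diag hC ha hs (by linarith),
    integral_ordinalSumSingle_antidiag hC ha hs has]
  ring

lemma blomqvistBeta_ordinalSumSingle (has : 2 * a + s = 1) :
    blomqvistBeta (ordinalSumSingle C a s) = 1 + 4 * s * excessOverMin C (1 / 2) (1 / 2) := by
  have hcentre : s * excessOverMin C ((1 / 2 - a) / s) ((1 / 2 - a) / s) =
      s * excessOverMin C (1 / 2) (1 / 2) := by
    rcases eq_or_ne s 0 with rfl | hs0
    · simp
    · rw [show (1 / 2 - a) / s = 1 / 2 by field_simp; linarith]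
  rw [blomqvistBeta, ordinalSumSingle, hcentre, min_self]
  ring

end OrdinalSumSingle

/-- Measures of the ordinal sum of a single copula C on the interval (a, 1−a). -/
theorem measures_ordinalSum_single (aP : ℝ) (ha : aP ∈ Icc (0:ℝ) (1/2))
    (C B : ℝ → ℝ → ℝ) (hC : IsCopula C)
    (hB : IsOrdinalSum (fun _ : Fin 1 => aP) (fun _ => 1 - aP) (fun _ => C) B) :
    spearmanRho B = (1 - 2*aP) ^ 3 * spearmanRho C + 8*aP^3 - 12*aP^2 + 6*aP ∧
    footrule B = (1 - 2*aP) ^ 2 * footrule C + 4*aP - 4*aP^2 ∧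
    giniGamma B = (1 - 2*aP) ^ 2 * giniGamma C + 4*aP - 4*aP^2 ∧
    blomqvistBeta B = (1 - 2*aP) * blomqvistBeta C + 2*aP := by
  obtain ⟨ha₀, ha₁⟩ := ha
  have hs : 0 ≤ 1 - aP - aP := by linarith
  have has : aP + (1 - aP - aP) ≤ 1 := by linarith
  have hsym : 2 * aP + (1 - aP - aP) = 1 := by ring
  have hBO := hB.eqOn_ordinalSumSingle hC
  have hCO := eqOn_ordinalSumSingle_zero_one C
  refine ⟨?_, ?_, ?_, ?_⟩
  · rw [spearmanRho_congr hBO, spearmanRho_congr hCO, spearmanRho_ordinalSumSingle hC ha₀ hs has,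
      spearmanRho_ordinalSumSingle hC le_rfl zero_le_one (by norm_num)]
    ring
  · rw [footrule_congr hBO, footrule_congr hCO, footrule_ordinalSumSingle hC ha₀ hs has,
      footrule_ordinalSumSingle hC le_rfl zero_le_one (by norm_num)]
    ring
  · rw [giniGamma_congr hBO, giniGamma_congr hCO, giniGamma_ordinalSumSingle hC ha₀ hs hsym,
      giniGamma_ordinalSumSingle hC le_rfl zero_le_one (by norm_num)]
    ring
  · rw [blomqvistBeta_congr hBO, blomqvistBeta_congr hCO, blomqvistBeta_ordinalSumSingle hsym,
      blomqvistBeta_ordinalSumSingle (by norm_num)]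
    ring
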